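/- arXiv:1203.1587 — 3 statements merged into one kernel-verified Lean document; each statement's English description precedes it below -/
import Mathlib

section
/- For every E0 > 0 and every C > 0 there exists γ0 > 0 such that for all γ ∈ (0, γ0) and all μ ∈ (0, Cγ], the set of transition frequencies for the parameters (E0, γ, μ) contains at most three elements. -/
/-- The cubic polynomial `f(P) = P(P-1)^2 + αP - β`. -/
noncomputable def cubicF (α β P : ℝ) : ℝ := P * (P - 1)^2 + α * P - β

/-- Its derivative `f'(P) = 3P^2 - 4P + 1 + α`. -/
noncomputable def cubicF' (α P : ℝ) : ℝ := 3 * P^2 - 4 * P + 1 + α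

/-- `α(ω; γ, E0) = 4γ⁴/(ω σ² ρ²)` with `ρ = ω+4`, `σ = ω - E0 - γ²/ρ`. -/
noncomputable def alphaPar (E0 γ ω : ℝ) : ℝ :=
  4 * γ^4 / (ω * (ω - E0 - γ^2 / (ω + 4))^2 * (ω + 4)^2)

/-- `β(ω; γ, μ, E0) = 4γ²μ/(σ³ ρ)`. -/
noncomputable def betaPar (E0 γ μ ω : ℝ) : ℝ :=
  4 * γ^2 * μ / ((ω - E0 - γ^2 / (ω + 4))^3 * (ω + 4))

/-- `ω` is a transition frequency for the parameters `(E0, γ, μ)`. -/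
def IsTransitionFreq (E0 γ μ ω : ℝ) : Prop :=
  0 < ω ∧ (ω - E0) * (ω + 4) - γ^2 > 0 ∧
    ∃ P : ℝ, cubicF (alphaPar E0 γ ω) (betaPar E0 γ μ ω) P = 0 ∧
      cubicF' (alphaPar E0 γ ω) P = 0

/-!
A transition frequency is one at which `f` has a double root `P = 1 - t`, that is
`α = t (2 - 3t)` and `β = 2t (1 - t)²`, with `0 < t < 2/3` because `α > 0`; dividing,
`(γ²/μ) ψ = α/β = (2 - 3t) / (2 (1 - t)²)` where `ψ = σ / (ω (ω + 4))`. On the admissible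
frequencies (`ω > 0`, `σ > 0`) `σ` grows at least at rate one and `α` is strictly decreasing.

Upper branch `1/3 ≤ t < 2/3`: there `β ≥ 4/27`, which forces `σ³ ≲ γ²μ ≤ Cγ³`, so `σ` is
small and `ψ` is increasing. Both `t ↦ t (2 - 3t)` and `t ↦ (2 - 3t) / (2 (1 - t)²)` decrease
on this range, so going up in `ω` the decrease of `α` pushes `t` up while the increase of `ψ`
pushes it down: at most one frequency.

Lower branch `0 < t < 1/3`: here `t` is the lower root of `t (2 - 3t) = α`, so transition
frequencies are zeros of `W = (γ²/μ) ψ - R(t(α))`. Its derivative has the sign of `μγ² - G`,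
where `G = σ³ N (1 - t)³ / B` and `B`, `N` are the numerators of `-α'`, `-ψ'`. Where `G > 0`
each factor of `G` is increasing and one strictly, so `G` takes the value `μγ²` at most once;
by Rolle, three zeros of `W` would need two such points: at most two frequencies.
-/

open Set Filter Topology

theorem Set.encard_le_one_of_forall_not_lt {α : Type*} [LinearOrder α] {s : Set α}
    (h : ∀ x ∈ s, ∀ y ∈ s, ¬x < y) : s.encard ≤ 1 :=
  encard_le_one_iff.2 fun a b ha hb => le_antisymm (not_lt.1 (h b hb a ha)) (not_lt.1 (h a ha b hb))

theorem Set.encard_le_two_of_forall_not_lt_lt {α : Type*} [LinearOrder α] {s : Set α}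
    (h : ∀ x ∈ s, ∀ y ∈ s, ∀ z ∈ s, x < y → ¬y < z) : s.encard ≤ 2 := by
  have hcover : s ⊆ (s ∩ lowerBounds s) ∪ {y ∈ s | ∃ x ∈ s, x < y} := by
    intro y hy
    by_cases hmin : ∃ x ∈ s, x < y
    · exact Or.inr ⟨hy, hmin⟩
    · push Not at hmin
      exact Or.inl ⟨hy, hmin⟩
  calc s.encard ≤ ((s ∩ lowerBounds s) ∪ {y ∈ s | ∃ x ∈ s, x < y}).encard := encard_mono hcover
    _ ≤ 1 + 1 := (encard_union_le _ _).trans (add_le_add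
        (encard_le_one_of_forall_not_lt fun x hx y hy hxy => not_le.2 hxy (hy.2 hx.1))
        (encard_le_one_of_forall_not_lt fun x hx y hy hxy =>
          let ⟨w, hw, hwx⟩ := hx.2; h w hw x hx.1 y hy.1 hwx hxy))
    _ = 2 := by norm_num

namespace TransitionFreq

def doubleRootAlpha (t : ℝ) : ℝ := t * (2 - 3 * t)

def doubleRootBeta (t : ℝ) : ℝ := 2 * t * (1 - t) ^ 2

noncomputable def doubleRootRatio (t : ℝ) : ℝ := (2 - 3 * t) / (2 * (1 - t) ^ 2)

noncomputable def lowerRoot (a : ℝ) : ℝ := (1 - √(1 - 3 * a)) / 3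

theorem eq_doubleRoot_of_cubicF_eq_zero {a b P : ℝ} (hf : cubicF a b P = 0)
    (hf' : cubicF' a P = 0) : a = doubleRootAlpha (1 - P) ∧ b = doubleRootBeta (1 - P) := by
  unfold cubicF at hf
  unfold cubicF' at hf'
  unfold doubleRootAlpha doubleRootBeta
  exact ⟨by linear_combination hf', by linear_combination -hf + P * hf'⟩

theorem mem_Ioo_of_doubleRootAlpha_pos {t : ℝ} (h : 0 < doubleRootAlpha t) : t ∈ Ioo 0 (2 / 3) := by
  unfold doubleRootAlpha at h
  rcases pos_and_pos_or_neg_and_neg_of_mul_pos h with h | h <;> constructor <;> linarith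

theorem doubleRootAlpha_lt_one_third {t : ℝ} (ht : t ≠ 1 / 3) : doubleRootAlpha t < 1 / 3 := by
  have : 0 < (1 - 3 * t) ^ 2 := by
    refine sq_pos_of_ne_zero fun h => ht ?_
    linarith
  unfold doubleRootAlpha
  nlinarith

theorem strictAntiOn_doubleRootAlpha : StrictAntiOn doubleRootAlpha (Ici (1 / 3)) := by
  intro a ha b hb hab
  simp only [mem_Ici] at ha hb
  unfold doubleRootAlpha
  nlinarith

theorem strictAntiOn_doubleRootRatio : StrictAntiOn doubleRootRatio (Ico (1 / 3) 1) := by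
  rintro a ⟨ha, ha1⟩ b ⟨hb, hb1⟩ hab
  unfold doubleRootRatio
  rw [div_lt_div_iff₀ (by nlinarith) (by nlinarith)]
  nlinarith [mul_pos (sub_pos.2 hab) (sub_pos.2 hb1), mul_nonneg (sub_nonneg.2 ha) (sub_nonneg.2 hb)]

theorem doubleRootRatio_eq_div {t : ℝ} (ht : t ≠ 0) :
    doubleRootRatio t = doubleRootAlpha t / doubleRootBeta t := by
  unfold doubleRootRatio doubleRootAlpha doubleRootBeta
  rw [show 2 * t * (1 - t) ^ 2 = t * (2 * (1 - t) ^ 2) by ring, mul_div_mul_left _ _ ht]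

theorem four_div_27_le_doubleRootBeta {t : ℝ} (ht : t ∈ Icc (1 / 3) (2 / 3)) :
    4 / 27 ≤ doubleRootBeta t := by
  obtain ⟨h1, h2⟩ := ht
  unfold doubleRootBeta
  nlinarith [mul_nonneg (sub_nonneg.2 h1) (sub_nonneg.2 h2),
    mul_nonneg (mul_nonneg (sub_nonneg.2 h1) (sub_nonneg.2 h2)) (sub_nonneg.2 h2)]

theorem lowerRoot_doubleRootAlpha {t : ℝ} (ht : t ≤ 1 / 3) : lowerRoot (doubleRootAlpha t) = t := by
  unfold lowerRoot doubleRootAlpha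
  rw [show 1 - 3 * (t * (2 - 3 * t)) = (1 - 3 * t) ^ 2 by ring, Real.sqrt_sq (by linarith)]
  ring

theorem one_sub_lowerRoot_pos (a : ℝ) : 0 < 1 - lowerRoot a := by
  unfold lowerRoot
  linarith [Real.sqrt_nonneg (1 - 3 * a)]

theorem one_sub_three_mul_lowerRoot_pos {a : ℝ} (ha : a < 1 / 3) : 0 < 1 - 3 * lowerRoot a := by
  have : 1 - 3 * lowerRoot a = √(1 - 3 * a) := by unfold lowerRoot; ring
  rw [this]
  exact Real.sqrt_pos.2 (by linarith)

theorem monotone_lowerRoot : Monotone lowerRoot := by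
  intro a b hab
  unfold lowerRoot
  gcongr

theorem hasDerivAt_lowerRoot {a : ℝ} (ha : a < 1 / 3) :
    HasDerivAt lowerRoot (1 / (2 * (1 - 3 * lowerRoot a))) a := by
  have hpos : 0 < 1 - 3 * a := by linarith
  refine ((((hasDerivAt_id a).const_mul 3).const_sub 1).sqrt hpos.ne' |>.const_sub 1
    |>.div_const 3).congr_deriv ?_
  rw [show 1 - 3 * lowerRoot a = √(1 - 3 * a) by unfold lowerRoot; ring]
  simp only [id]
  field_simp

theorem hasDerivAt_doubleRootRatio {t : ℝ} (ht : t ≠ 1) :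
    HasDerivAt doubleRootRatio ((1 - 3 * t) / (2 * (1 - t) ^ 3)) t := by
  have h1t : 1 - t ≠ 0 := sub_ne_zero.2 (Ne.symm ht)
  refine (((hasDerivAt_id t).const_mul 3).const_sub 2 |>.div
    (((hasDerivAt_id t).const_sub 1).fun_pow 2 |>.const_mul 2) (by simp [h1t])).congr_deriv ?_
  simp only [id]
  field_simp
  ring

noncomputable def sigma (E0 γ x : ℝ) : ℝ := x - E0 - γ ^ 2 / (x + 4)

def admissible (E0 γ : ℝ) : Set ℝ := {x | 0 < x ∧ 0 < sigma E0 γ x}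

noncomputable def psi (E0 γ x : ℝ) : ℝ := sigma E0 γ x / (x * (x + 4))

def HasDoubleRoot (E0 γ μ x t : ℝ) : Prop :=
  alphaPar E0 γ x = doubleRootAlpha t ∧ betaPar E0 γ μ x = doubleRootBeta t

section

variable {E0 γ μ x y : ℝ}

theorem alphaPar_eq : alphaPar E0 γ x = 4 * γ ^ 4 / (x * sigma E0 γ x ^ 2 * (x + 4) ^ 2) := rfl

theorem betaPar_eq : betaPar E0 γ μ x = 4 * γ ^ 2 * μ / (sigma E0 γ x ^ 3 * (x + 4)) := rfl

theorem sigma_mul_add_four (hx : x + 4 ≠ 0) :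
    sigma E0 γ x * (x + 4) = (x - E0) * (x + 4) - γ ^ 2 := by
  unfold sigma
  field_simp

theorem sigma_le_sub (hx : -4 < x) : sigma E0 γ x ≤ x - E0 := by
  have : 0 ≤ γ ^ 2 / (x + 4) := div_nonneg (sq_nonneg γ) (by linarith)
  unfold sigma
  linarith

theorem sub_le_sigma_sub (hx : -4 < x) (hxy : x ≤ y) :
    y - x ≤ sigma E0 γ y - sigma E0 γ x := by
  have : γ ^ 2 / (y + 4) ≤ γ ^ 2 / (x + 4) := by gcongr; linarith
  unfold sigma
  linarith

theorem sigma_lt_sigma (hx : -4 < x) (hxy : x < y) : sigma E0 γ x < sigma E0 γ y := by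
  linarith [sub_le_sigma_sub (E0 := E0) (γ := γ) hx hxy.le]

theorem lt_of_mem_admissible (hx : x ∈ admissible E0 γ) : E0 < x := by
  linarith [sigma_le_sub (E0 := E0) (γ := γ) (by linarith [hx.1] : -4 < x), hx.2]

theorem mem_admissible_of_le (hx : x ∈ admissible E0 γ) (hxy : x ≤ y) : y ∈ admissible E0 γ := by
  refine ⟨hx.1.trans_le hxy, ?_⟩
  linarith [hx.2, sub_le_sigma_sub (E0 := E0) (γ := γ) (by linarith [hx.1] : -4 < x) hxy]

theorem ordConnected_admissible : (admissible E0 γ).OrdConnected :=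
  ⟨fun _ hx _ _ _ hz => mem_admissible_of_le hx hz.1⟩

theorem alphaPar_pos (hγ : γ ≠ 0) (hx : x ∈ admissible E0 γ) : 0 < alphaPar E0 γ x := by
  obtain ⟨hx0, hσ⟩ := hx
  rw [alphaPar_eq]
  positivity

theorem alphaPar_lt_alphaPar (hγ : γ ≠ 0) (hx : x ∈ admissible E0 γ) (hxy : x < y) :
    alphaPar E0 γ y < alphaPar E0 γ x := by
  obtain ⟨hx0, hσ⟩ := hx
  have := sigma_lt_sigma (E0 := E0) (γ := γ) (by linarith) hxy
  rw [alphaPar_eq, alphaPar_eq]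
  apply div_lt_div_of_pos_left (by positivity) (by positivity)
  gcongr

theorem alphaPar_div_betaPar (hx : x ∈ admissible E0 γ) :
    alphaPar E0 γ x / betaPar E0 γ μ x = γ ^ 2 / μ * psi E0 γ x := by
  obtain ⟨hx0, hσ⟩ := hx
  rw [alphaPar_eq, betaPar_eq, psi]
  field_simp

theorem HasDoubleRoot.psi_eq {t : ℝ} (h : HasDoubleRoot E0 γ μ x t) (hx : x ∈ admissible E0 γ)
    (ht : t ≠ 0) : γ ^ 2 / μ * psi E0 γ x = doubleRootRatio t := by
  rw [doubleRootRatio_eq_div ht, ← h.1, ← h.2, alphaPar_div_betaPar hx]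

theorem IsTransitionFreq.exists_hasDoubleRoot (h : IsTransitionFreq E0 γ μ x) (hγ : γ ≠ 0) :
    x ∈ admissible E0 γ ∧ ∃ t ∈ Ioo 0 (2 / 3), HasDoubleRoot E0 γ μ x t := by
  obtain ⟨hx, hq, P, hf, hf'⟩ := h
  have hσ : 0 < sigma E0 γ x := by
    have := sigma_mul_add_four (E0 := E0) (γ := γ) (by linarith : x + 4 ≠ 0)
    nlinarith
  have hadm : x ∈ admissible E0 γ := ⟨hx, hσ⟩
  have hroot := eq_doubleRoot_of_cubicF_eq_zero hf hf'
  refine ⟨hadm, 1 - P, mem_Ioo_of_doubleRootAlpha_pos ?_, hroot⟩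
  exact hroot.1 ▸ alphaPar_pos hγ hadm

def upperBranch (E0 γ μ : ℝ) : Set ℝ :=
  {x | x ∈ admissible E0 γ ∧ ∃ t ∈ Ico (1 / 3) (2 / 3), HasDoubleRoot E0 γ μ x t}

def lowerBranch (E0 γ μ : ℝ) : Set ℝ :=
  {x | x ∈ admissible E0 γ ∧ ∃ t ∈ Ioo 0 (1 / 3), HasDoubleRoot E0 γ μ x t}

theorem setOf_isTransitionFreq_subset (hγ : γ ≠ 0) :
    {x | IsTransitionFreq E0 γ μ x} ⊆ upperBranch E0 γ μ ∪ lowerBranch E0 γ μ := by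
  intro x hx
  obtain ⟨hadm, t, ht, hxt⟩ := IsTransitionFreq.exists_hasDoubleRoot hx hγ
  rcases lt_or_ge t (1 / 3) with h | h
  · exact Or.inr ⟨hadm, t, ⟨ht.1, h⟩, hxt⟩
  · exact Or.inl ⟨hadm, t, ⟨h, ht.2⟩, hxt⟩

theorem four_mul_sigma_lt (hE0 : 0 < E0) (hx : x ∈ admissible E0 γ)
    (hβ : 4 / 27 ≤ betaPar E0 γ μ x) (hsmall : 432 * γ ^ 2 * μ < E0 ^ 3) :
    4 * sigma E0 γ x < E0 := by
  obtain ⟨hx0, hσ⟩ := hx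
  rw [betaPar_eq, le_div_iff₀ (by positivity)] at hβ
  -- `x + 4 > 4` turns `σ³ (x + 4) ≤ 27 γ² μ` into `(4σ)³ < 16 · 27 γ² μ = 432 γ² μ`
  have hcube : (4 * sigma E0 γ x) ^ 3 < E0 ^ 3 := by
    nlinarith [pow_pos hσ 3]
  exact lt_of_pow_lt_pow_left₀ 3 hE0.le hcube

theorem psi_lt_psi (hx : x ∈ admissible E0 γ) (hy : 4 * sigma E0 γ y ≤ x) (hxy : x < y) :
    psi E0 γ x < psi E0 γ y := by
  obtain ⟨hx0, hσ⟩ := hx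
  set d := y - x
  have hd : 0 < d := sub_pos.2 hxy
  have hy0 : 0 < y := hx0.trans hxy
  have hgrow : d ≤ sigma E0 γ y - sigma E0 γ x := sub_le_sigma_sub (by linarith) hxy.le
  have hσd : sigma E0 γ x * (2 * x + 4 + d) < x * (x + 4) := by nlinarith
  have hyy : y * (y + 4) = x * (x + 4) + d * (2 * x + 4 + d) := by ring
  rw [psi, psi, div_lt_div_iff₀ (by positivity) (by positivity), hyy]
  nlinarith [mul_le_mul_of_nonneg_right hgrow (by positivity : 0 ≤ x * (x + 4))]

theorem encard_upperBranch_le_one (hE0 : 0 < E0) (hγ : γ ≠ 0) (hμ : 0 < μ)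
    (hsmall : 432 * γ ^ 2 * μ < E0 ^ 3) : (upperBranch E0 γ μ).encard ≤ 1 := by
  refine Set.encard_le_one_of_forall_not_lt ?_
  rintro x ⟨hx, t, ht, hxt⟩ y ⟨hy, s, hs, hys⟩ hxy
  have hts : t < s := by
    have h := alphaPar_lt_alphaPar hγ hx hxy
    rw [hxt.1, hys.1] at h
    exact (strictAntiOn_doubleRootAlpha.lt_iff_gt (mem_Ici.2 hs.1) (mem_Ici.2 ht.1)).1 h
  have hst : s < t := by
    have hσy : 4 * sigma E0 γ y < E0 :=
      four_mul_sigma_lt hE0 hy (hys.2 ▸ four_div_27_le_doubleRootBeta (Ico_subset_Icc_self hs))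
        hsmall
    have h := psi_lt_psi hx (by linarith [lt_of_mem_admissible hx]) hxy
    have hψ := mul_lt_mul_of_pos_left h (by positivity : 0 < γ ^ 2 / μ)
    rw [hxt.psi_eq hx (by linarith [ht.1]),
      hys.psi_eq hy (by linarith [hs.1])] at hψ
    exact (strictAntiOn_doubleRootRatio.lt_iff_gt ⟨ht.1, by linarith [ht.2]⟩
      ⟨hs.1, by linarith [hs.2]⟩).1 hψ
  exact lt_asymm hts hst

def alphaDerivNum (E0 γ x : ℝ) : ℝ :=
  (x - E0) * (x + 4) - γ ^ 2 + 2 * x * (2 * x + 4 - E0)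

def psiDerivNum (E0 γ x : ℝ) : ℝ :=
  (x + 4) * (x ^ 2 - 2 * E0 * x - 4 * E0) - γ ^ 2 * (3 * x + 4)

noncomputable def defect (E0 γ μ x : ℝ) : ℝ :=
  γ ^ 2 / μ * psi E0 γ x - doubleRootRatio (lowerRoot (alphaPar E0 γ x))

noncomputable def criticalLevel (E0 γ x : ℝ) : ℝ :=
  sigma E0 γ x ^ 3 / alphaDerivNum E0 γ x * psiDerivNum E0 γ x *
    (1 - lowerRoot (alphaPar E0 γ x)) ^ 3

theorem hasDerivAt_sigma (hx : x + 4 ≠ 0) :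
    HasDerivAt (sigma E0 γ) (1 + γ ^ 2 / (x + 4) ^ 2) x := by
  refine (((hasDerivAt_id' x).sub_const E0).sub
    ((hasDerivAt_id' x).add_const 4 |>.inv hx |>.const_mul (γ ^ 2))).congr_deriv ?_
  field_simp
  ring

theorem hasDerivAt_psi (hx : x ∈ admissible E0 γ) :
    HasDerivAt (psi E0 γ) (-psiDerivNum E0 γ x / (x ^ 2 * (x + 4) ^ 3)) x := by
  have hx0 := hx.1
  refine ((hasDerivAt_sigma (by linarith)).fun_div
    ((hasDerivAt_id' x).fun_mul ((hasDerivAt_id' x).add_const 4)) (by positivity)).congr_deriv ?_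
  simp only [sigma, psiDerivNum]
  field_simp
  ring

theorem hasDerivAt_alphaPar (hx : x ∈ admissible E0 γ) :
    HasDerivAt (alphaPar E0 γ)
      (-(4 * γ ^ 4 * alphaDerivNum E0 γ x) / (x ^ 2 * (sigma E0 γ x * (x + 4)) ^ 3)) x := by
  obtain ⟨hx0, hσ⟩ := hx
  have h4 : x + 4 ≠ 0 := by linarith
  have hq := sigma_mul_add_four (E0 := E0) (γ := γ) h4
  have hq0 : (x - E0) * (x + 4) - γ ^ 2 ≠ 0 := by rw [← hq]; positivity
  have hrat : alphaPar E0 γ =ᶠ[𝓝 x] fun y => 4 * γ ^ 4 / (y * ((y - E0) * (y + 4) - γ ^ 2) ^ 2) := by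
    filter_upwards [eventually_ne_nhds (show x ≠ -4 by linarith)] with y hy
    rw [alphaPar_eq, ← sigma_mul_add_four (fun h => hy (by linarith))]
    ring
  refine (((hasDerivAt_const x (4 * γ ^ 4)).fun_div ((hasDerivAt_id' x).fun_mul
    ((((hasDerivAt_id' x).sub_const E0).fun_mul ((hasDerivAt_id' x).add_const 4)).sub_const
      (γ ^ 2) |>.fun_pow 2)) (by positivity)).congr_deriv ?_).congr_of_eventuallyEq hrat
  rw [hq, alphaDerivNum]
  field_simp
  ring

theorem hasDerivAt_alphaDerivNum : HasDerivAt (alphaDerivNum E0 γ) (10 * x + 12 - 3 * E0) x := by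
  refine (((((hasDerivAt_id' x).sub_const E0).fun_mul ((hasDerivAt_id' x).add_const 4)).sub_const
    (γ ^ 2)).add (((hasDerivAt_id' x).const_mul 2).fun_mul
      ((((hasDerivAt_id' x).const_mul 2).add_const 4).sub_const E0))).congr_deriv ?_
  ring

theorem alphaDerivNum_pos (hx : x ∈ admissible E0 γ) : 0 < alphaDerivNum E0 γ x := by
  have hE0x := lt_of_mem_admissible hx
  obtain ⟨hx0, hσ⟩ := hx
  have hq := sigma_mul_add_four (E0 := E0) (γ := γ) (by linarith : x + 4 ≠ 0)
  have : 0 < sigma E0 γ x * (x + 4) := by positivity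
  unfold alphaDerivNum
  nlinarith

theorem hasDerivAt_defect (hμ : μ ≠ 0) (hx : x ∈ admissible E0 γ)
    (hα : alphaPar E0 γ x < 1 / 3) :
    HasDerivAt (defect E0 γ μ)
      (γ ^ 2 * alphaDerivNum E0 γ x / (μ * x ^ 2 * (sigma E0 γ x * (x + 4)) ^ 3 *
        (1 - lowerRoot (alphaPar E0 γ x)) ^ 3) * (μ * γ ^ 2 - criticalLevel E0 γ x)) x := by
  have hB := (alphaDerivNum_pos hx).ne'
  have h3τ := (one_sub_three_mul_lowerRoot_pos hα).ne'
  have h1τ := (one_sub_lowerRoot_pos (alphaPar E0 γ x)).ne'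
  have hτ1 : lowerRoot (alphaPar E0 γ x) ≠ 1 := fun h => h1τ (by rw [h]; ring)
  obtain ⟨hx0, hσ⟩ := hx
  refine (((hasDerivAt_psi ⟨hx0, hσ⟩).const_mul (γ ^ 2 / μ)).sub
    ((hasDerivAt_doubleRootRatio hτ1).comp x
      ((hasDerivAt_lowerRoot hα).comp x (hasDerivAt_alphaPar ⟨hx0, hσ⟩)))).congr_deriv ?_
  rw [criticalLevel]
  field_simp
  ring

theorem HasDoubleRoot.defect_eq_zero {t : ℝ} (h : HasDoubleRoot E0 γ μ x t)
    (hx : x ∈ admissible E0 γ) (ht : t ∈ Ioo 0 (1 / 3)) :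
    defect E0 γ μ x = 0 := by
  rw [defect, h.psi_eq hx ht.1.ne', h.1, lowerRoot_doubleRootAlpha ht.2.le, sub_self]

theorem exists_criticalLevel_eq {a b : ℝ} (hγ : γ ≠ 0) (hμ : μ ≠ 0) (ha : a ∈ admissible E0 γ)
    (hα : alphaPar E0 γ a < 1 / 3) (hab : a < b) (hW : defect E0 γ μ a = defect E0 γ μ b) :
    ∃ c ∈ Ioo a b, criticalLevel E0 γ c = μ * γ ^ 2 := by
  have hderiv : ∀ x ∈ Icc a b, HasDerivAt (defect E0 γ μ)
      (γ ^ 2 * alphaDerivNum E0 γ x / (μ * x ^ 2 * (sigma E0 γ x * (x + 4)) ^ 3 *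
        (1 - lowerRoot (alphaPar E0 γ x)) ^ 3) * (μ * γ ^ 2 - criticalLevel E0 γ x)) x := by
    intro x hx
    have hx' := mem_admissible_of_le ha hx.1
    refine hasDerivAt_defect hμ hx' (lt_of_le_of_lt ?_ hα)
    rcases hx.1.eq_or_lt with rfl | hax
    · rfl
    · exact (alphaPar_lt_alphaPar hγ ha hax).le
  obtain ⟨c, hc, hcrit⟩ := exists_hasDerivAt_eq_zero hab
    (fun x hx => (hderiv x hx).continuousAt.continuousWithinAt) hW
    (fun x hx => hderiv x (Ioo_subset_Icc_self hx))
  refine ⟨c, hc, ?_⟩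
  have hcadm := mem_admissible_of_le ha hc.1.le
  have := alphaDerivNum_pos hcadm
  obtain ⟨hc0, hσc⟩ := hcadm
  have := one_sub_lowerRoot_pos (alphaPar E0 γ c)
  have hfac : γ ^ 2 * alphaDerivNum E0 γ c / (μ * c ^ 2 * (sigma E0 γ c * (c + 4)) ^ 3 *
      (1 - lowerRoot (alphaPar E0 γ c)) ^ 3) ≠ 0 := by
    have : c + 4 ≠ 0 := by linarith
    positivity
  linarith [(mul_eq_zero.1 hcrit).resolve_left hfac]

theorem strictMonoOn_sigma_cube_div_alphaDerivNum (hE0 : 0 < E0) :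
    StrictMonoOn (fun x => sigma E0 γ x ^ 3 / alphaDerivNum E0 γ x) (admissible E0 γ) := by
  have hderiv : ∀ x ∈ admissible E0 γ, HasDerivAt (fun x => sigma E0 γ x ^ 3 / alphaDerivNum E0 γ x)
      ((3 * sigma E0 γ x ^ 2 * (1 + γ ^ 2 / (x + 4) ^ 2) * alphaDerivNum E0 γ x -
        sigma E0 γ x ^ 3 * (10 * x + 12 - 3 * E0)) / alphaDerivNum E0 γ x ^ 2) x := by
    intro x hx
    refine (((hasDerivAt_sigma (by linarith [hx.1])).fun_pow 3).fun_div hasDerivAt_alphaDerivNum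
      (alphaDerivNum_pos hx).ne').congr_deriv ?_
    push_cast
    ring
  refine strictMonoOn_of_deriv_pos ordConnected_admissible.convex
    (fun x hx => (hderiv x hx).continuousAt.continuousWithinAt) fun x hx => ?_
  have hx := interior_subset hx
  rw [(hderiv x hx).deriv]
  have hB := alphaDerivNum_pos hx
  have hE0x := lt_of_mem_admissible hx
  obtain ⟨hx0, hσ⟩ := hx
  have hσa := sigma_le_sub (E0 := E0) (γ := γ) (by linarith : -4 < x)
  have hq := sigma_mul_add_four (E0 := E0) (γ := γ) (by linarith : x + 4 ≠ 0)
  have h3B : sigma E0 γ x * (10 * x + 12 - 3 * E0) < 3 * alphaDerivNum E0 γ x := by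
    have : 0 < sigma E0 γ x * (x + 4) := by positivity
    calc sigma E0 γ x * (10 * x + 12 - 3 * E0) ≤ (x - E0) * (10 * x + 12 - 3 * E0) := by
          gcongr; linarith
      _ < 3 * alphaDerivNum E0 γ x := by unfold alphaDerivNum; nlinarith
  have hσ' : 1 ≤ 1 + γ ^ 2 / (x + 4) ^ 2 := le_add_of_nonneg_right (by positivity)
  apply div_pos _ (by positivity)
  nlinarith [mul_le_mul_of_nonneg_right hσ' (by positivity : 0 ≤ 3 * alphaDerivNum E0 γ x),
    pow_pos hσ 2]

theorem psiDerivNum_lt_psiDerivNum (hx : x ∈ admissible E0 γ) (hN : 0 < psiDerivNum E0 γ x)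
    (hxy : x < y) : psiDerivNum E0 γ x < psiDerivNum E0 γ y := by
  have hE0x := lt_of_mem_admissible hx
  obtain ⟨hx0, hσ⟩ := hx
  have hq := sigma_mul_add_four (E0 := E0) (γ := γ) (by linarith : x + 4 ≠ 0)
  have hγq : γ ^ 2 < (x - E0) * (x + 4) := by nlinarith [mul_pos hσ (by linarith : 0 < x + 4)]
  have hm : γ ^ 2 < x ^ 2 - 2 * E0 * x - 4 * E0 := by
    unfold psiDerivNum at hN
    nlinarith [sq_nonneg γ]
  have hdiff : psiDerivNum E0 γ y - psiDerivNum E0 γ x =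
      (y - x) * (x ^ 2 - 2 * E0 * x - 4 * E0 + (y + 4) * (y + x - 2 * E0) - 3 * γ ^ 2) := by
    unfold psiDerivNum; ring
  have hgrow : 2 * ((x - E0) * (x + 4)) < (y + 4) * (y + x - 2 * E0) := by nlinarith
  rw [← sub_pos, hdiff]
  exact mul_pos (sub_pos.2 hxy) (by linarith)

theorem criticalLevel_lt_criticalLevel (hE0 : 0 < E0) (hγ : γ ≠ 0) (hx : x ∈ admissible E0 γ)
    (hpos : 0 < criticalLevel E0 γ x) (hxy : x < y) :
    criticalLevel E0 γ x < criticalLevel E0 γ y := by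
  have hy := mem_admissible_of_le hx hxy.le
  have hS : 0 < sigma E0 γ x ^ 3 / alphaDerivNum E0 γ x := by
    have := alphaDerivNum_pos hx
    have := hx.2
    positivity
  have hN : 0 < psiDerivNum E0 γ x :=
    pos_of_mul_pos_right (pos_of_mul_pos_left hpos (pow_pos (one_sub_lowerRoot_pos _) 3).le) hS.le
  have hτ : (1 - lowerRoot (alphaPar E0 γ x)) ^ 3 ≤ (1 - lowerRoot (alphaPar E0 γ y)) ^ 3 := by
    gcongr
    · exact (one_sub_lowerRoot_pos _).le
    · exact monotone_lowerRoot (alphaPar_lt_alphaPar hγ hx hxy).le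
  have hNy := psiDerivNum_lt_psiDerivNum hx hN hxy
  have hSy := strictMonoOn_sigma_cube_div_alphaDerivNum hE0 hx hy hxy
  unfold criticalLevel
  exact mul_lt_mul (mul_lt_mul'' hSy hNy hS.le hN.le) hτ (pow_pos (one_sub_lowerRoot_pos _) 3)
    (mul_nonneg (hS.trans hSy).le (hN.trans hNy).le)

theorem encard_lowerBranch_le_two (hE0 : 0 < E0) (hγ : γ ≠ 0) (hμ : 0 < μ) :
    (lowerBranch E0 γ μ).encard ≤ 2 := by
  refine Set.encard_le_two_of_forall_not_lt_lt ?_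
  rintro x ⟨hx, t, ht, hxt⟩ y ⟨hy, s, hs, hys⟩ z ⟨hz, r, hr, hzr⟩ hxy hyz
  obtain ⟨c, hc, hGc⟩ := exists_criticalLevel_eq hγ hμ.ne' hx
    (hxt.1 ▸ doubleRootAlpha_lt_one_third ht.2.ne) hxy
    (by rw [hxt.defect_eq_zero hx ht, hys.defect_eq_zero hy hs])
  obtain ⟨d, hd, hGd⟩ := exists_criticalLevel_eq hγ hμ.ne' hy
    (hys.1 ▸ doubleRootAlpha_lt_one_third hs.2.ne) hyz
    (by rw [hys.defect_eq_zero hy hs, hzr.defect_eq_zero hz hr])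
  have hlt := criticalLevel_lt_criticalLevel hE0 hγ (mem_admissible_of_le hx hc.1.le)
    (by rw [hGc]; positivity) (hc.2.trans hd.1)
  rw [hGc, hGd] at hlt
  exact lt_irrefl _ hlt

end

end TransitionFreq

open TransitionFreq in
theorem at_most_three_transition_frequencies_general
    (E0 C : ℝ) (hE0 : 0 < E0) :
    ∃ γ0 > 0, ∀ γ : ℝ, 0 < γ → γ < γ0 → ∀ μ : ℝ, 0 < μ → μ ≤ C * γ →
      {ω : ℝ | IsTransitionFreq E0 γ μ ω}.encard ≤ 3 := by
  have hsmall : ∀ᶠ γ in 𝓝 (0 : ℝ), 432 * C * γ ^ 3 < E0 ^ 3 :=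
    ((by fun_prop : Continuous fun γ : ℝ => 432 * C * γ ^ 3).tendsto' 0 0 (by simp)).eventually
      (gt_mem_nhds (by positivity))
  obtain ⟨γ0, hγ0, hγ0small⟩ := Metric.eventually_nhds_iff.1 hsmall
  refine ⟨γ0, hγ0, fun γ hγ hγγ0 μ hμ hμC => ?_⟩
  have h432 : 432 * γ ^ 2 * μ < E0 ^ 3 := by
    have := hγ0small (by rwa [Real.dist_0_eq_abs, abs_of_pos hγ])
    nlinarith [mul_le_mul_of_nonneg_left hμC (by positivity : (0 : ℝ) ≤ 432 * γ ^ 2)]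
  calc {ω | IsTransitionFreq E0 γ μ ω}.encard
      ≤ (upperBranch E0 γ μ ∪ lowerBranch E0 γ μ).encard :=
        Set.encard_mono (setOf_isTransitionFreq_subset hγ.ne')
    _ ≤ 1 + 2 := (Set.encard_union_le _ _).trans (add_le_add
        (encard_upperBranch_le_one hE0 hγ.ne' hμ h432) (encard_lowerBranch_le_two hE0 hγ.ne' hμ))
    _ = 3 := by norm_num

/-- for small `γ` and `μ ≤ Cγ`, there are at most three transition
frequencies. -/
theorem at_most_three_transition_frequencies
    (E0 C : ℝ) (hE0 : 0 < E0) (hC : 0 < C) :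
    ∃ γ0 > 0, ∀ γ : ℝ, 0 < γ → γ < γ0 → ∀ μ : ℝ, 0 < μ → μ ≤ C * γ →
      {ω : ℝ | IsTransitionFreq E0 γ μ ω}.encard ≤ 3 :=
  at_most_three_transition_frequencies_general E0 C hE0
end

section
/- Let ω > 0, γ > 0, E0 ∈ ℝ and μ > 0. If the response equation R·(μR + γ²/(ω+4) − (ω − E0))² + (4γ⁴/(ω(ω+4)²))·R − 4γ²/(ω+4) = 0 has two distinct real solutions R, then (ω − E0)(ω + 4) − γ² > 0 (in particular ω > E0). -/
set_option maxHeartbeats 1000000 in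

/-- if the response equation has two distinct real solutions, then
`(ω - E0)(ω + 4) - γ² > 0`. -/
theorem multiple_responses_necessary_condition
    (ω γ E0 μ : ℝ) (hω : 0 < ω) (hγ : 0 < γ) (hμ : 0 < μ) (R1 R2 : ℝ)
    (hne : R1 ≠ R2)
    (h1 : R1 * (μ * R1 + γ^2 / (ω + 4) - (ω - E0))^2 +
        (4 * γ^4 / (ω * (ω + 4)^2)) * R1 - 4 * γ^2 / (ω + 4) = 0)
    (h2 : R2 * (μ * R2 + γ^2 / (ω + 4) - (ω - E0))^2 +
        (4 * γ^4 / (ω * (ω + 4)^2)) * R2 - 4 * γ^2 / (ω + 4) = 0) :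
    (ω - E0) * (ω + 4) - γ^2 > 0 := by
  have hw4 : (0:ℝ) < ω + 4 := by linarith
  set a : ℝ := γ^2/(ω+4) - (ω - E0) with ha
  set e : ℝ := 4*γ^4/(ω*(ω+4)^2) with he_def
  set k : ℝ := 4*γ^2/(ω+4) with hk_def
  have he : 0 < e := by rw [he_def]; positivity
  have hk : 0 < k := by rw [hk_def]; positivity
  have h1' : R1 * ((μ*R1 + a)^2 + e) = k := by
    rw [ha, he_def, hk_def]; linear_combination h1
  have h2' : R2 * ((μ*R2 + a)^2 + e) = k := by
    rw [ha, he_def, hk_def]; linear_combination h2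
  have hR1 : 0 < R1 := by nlinarith [sq_nonneg (μ*R1 + a)]
  have hR2 : 0 < R2 := by nlinarith [sq_nonneg (μ*R2 + a)]
  have hsub : (R1 - R2) * (μ^2*(R1^2 + R1*R2 + R2^2) + 2*μ*a*(R1+R2) + a^2 + e) = 0 := by
    linear_combination h1' - h2'
  have key : μ^2*(R1^2 + R1*R2 + R2^2) + 2*μ*a*(R1+R2) + a^2 + e = 0 :=
    (mul_eq_zero.mp hsub).resolve_left (sub_ne_zero_of_ne hne)
  have hane : a < 0 := by
    by_contra hcon
    push_neg at hcon
    nlinarith [mul_pos hR1 hR2, sq_nonneg R1, sq_nonneg R2, sq_nonneg a,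
      mul_pos hμ hR1, mul_pos hμ hR2, mul_nonneg hcon (mul_pos hμ hR1).le,
      mul_nonneg hcon (mul_pos hμ hR2).le, sq_nonneg μ, mul_pos hμ hμ]
  have hpos : (-(γ^2/(ω+4) - (ω - E0)))*(ω+4) > 0 := by
    rw [← ha]; exact mul_pos (neg_pos.mpr hane) hw4
  have hdiv : γ^2/(ω+4)*(ω+4) = γ^2 := div_mul_cancel₀ _ hw4.ne'
  nlinarith [hpos, hdiv]
end

section
/- Let d ∈ ℝ. There exist δ0 > 0, r > 0, and functions q1, q2 : (0, δ0) → ℝ with q2(δ) < 0 < q1(δ) and q1(δ) → 0, q2(δ) → 0 as δ → 0⁺, such that for every δ ∈ (0, δ0) the set of solutions q ∈ (−r, r) of the equation q²(1 + d·q) = δ is exactly {q1(δ), q2(δ)}, and moreover (q1(δ)² − q2(δ)²)/δ^{3/2} → −2d as δ → 0⁺. -/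
open Filter Set Topology

/-!
On `|q| ≤ r` with `4|d|r ≤ 1` the factor `1 + dq` stays above `1/2`, so `q ↦ q²(1 + dq)` is
strictly monotone on `[0, r]`, and the intermediate value theorem gives exactly one positive root
`a`, with `a² ≤ 2δ`. Substituting `q ↦ -q`, `d ↦ -d` turns the negative root into `-b`, where `b`
is the positive root of `b²(1 - db) = δ`. Since `a = √δ/√(1 + da)` and `b = √δ/√(1 - db)`, exactly
`a² - b² = δ/(1 + da) - δ/(1 - db) = -dδ(a + b)/((1 + da)(1 - db))` and
`a + b = √δ (1/√(1 + da) + 1/√(1 - db))`, so `(a² - b²)/δ^{3/2}` is a function of `(a, b)`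
continuous at the origin, where it equals `-2d`.
-/

namespace CuspNormalForm

variable {d r δ : ℝ}

lemma half_le_one_add_mul {q : ℝ} (hdr : 4 * |d| * r ≤ 1) (hq : |q| ≤ r) :
    1 / 2 ≤ 1 + d * q := by
  have : |d * q| ≤ 1 / 4 := by
    rw [abs_mul]; nlinarith [abs_nonneg d, abs_nonneg q]
  linarith [neg_abs_le (d * q)]

lemma strictMonoOn_Icc (hdr : 4 * |d| * r ≤ 1) :
    StrictMonoOn (fun q : ℝ => q ^ 2 * (1 + d * q)) (Icc 0 r) := by
  refine strictMonoOn_of_deriv_pos (convex_Icc 0 r) (by fun_prop) fun x hx => ?_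
  rw [interior_Icc] at hx
  have hderiv : HasDerivAt (fun q : ℝ => q ^ 2 * (1 + d * q)) (x * (2 + 3 * d * x)) x :=
    ((hasDerivAt_pow 2 x).fun_mul (((hasDerivAt_id' x).const_mul d).const_add 1)).congr_deriv
      (by ring)
  have := half_le_one_add_mul hdr (abs_of_pos hx.1 ▸ hx.2.le)
  rw [hderiv.deriv]
  nlinarith [hx.1]

lemma existsUnique_root_Ioo (hr : 0 < r) (hdr : 4 * |d| * r ≤ 1) (hδ : δ ∈ Ioo 0 (r ^ 2 / 2)) :
    ∃! q, q ∈ Ioo 0 r ∧ q ^ 2 * (1 + d * q) = δ := by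
  have hFr : r ^ 2 / 2 ≤ r ^ 2 * (1 + d * r) := by
    nlinarith [half_le_one_add_mul hdr (abs_of_pos hr).le, sq_nonneg r]
  have hδ' : δ ∈ Ioo ((0 : ℝ) ^ 2 * (1 + d * 0)) (r ^ 2 * (1 + d * r)) := by
    simpa using ⟨hδ.1, hδ.2.trans_le hFr⟩
  obtain ⟨q, hq, hFq⟩ := intermediate_value_Ioo hr.le
    (f := fun q : ℝ => q ^ 2 * (1 + d * q)) (by fun_prop) hδ'
  exact ⟨q, ⟨hq, hFq⟩, fun p hp => (strictMonoOn_Icc hdr).injOn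
    (Ioo_subset_Icc_self hp.1) (Ioo_subset_Icc_self hq) (hp.2.trans hFq.symm)⟩

lemma sq_le_two_mul_of_root {q : ℝ} (hdr : 4 * |d| * r ≤ 1) (hq : |q| ≤ r)
    (hroot : q ^ 2 * (1 + d * q) = δ) : q ^ 2 ≤ 2 * δ := by
  nlinarith [half_le_one_add_mul hdr hq, sq_nonneg q]

lemma tendsto_root_nhdsGT_zero {δ₀ : ℝ} {p : ℝ → ℝ} (hδ₀ : 0 < δ₀) (hdr : 4 * |d| * r ≤ 1)
    (hp : ∀ δ ∈ Ioo 0 δ₀, p δ ∈ Ioo 0 r ∧ p δ ^ 2 * (1 + d * p δ) = δ) :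
    Tendsto p (𝓝[>] 0) (𝓝 0) := by
  have hsmall : Ioo 0 δ₀ ∈ 𝓝[>] (0 : ℝ) := Ioo_mem_nhdsGT hδ₀
  have hsqrt : Tendsto (fun δ : ℝ => √(2 * δ)) (𝓝[>] 0) (𝓝 0) := by
    simpa using ((by fun_prop : Continuous fun δ : ℝ => √(2 * δ)).tendsto 0).mono_left
      nhdsWithin_le_nhds
  refine squeeze_zero' ?_ ?_ hsqrt
  · filter_upwards [hsmall] with δ hδ using (hp δ hδ).1.1.le
  · filter_upwards [hsmall] with δ hδ
    obtain ⟨⟨hpos, hlt⟩, hroot⟩ := hp δ hδ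
    exact Real.le_sqrt_of_sq_le
      (sq_le_two_mul_of_root hdr ((abs_of_pos hpos).trans_le hlt.le) hroot)

lemma root_set_eq (hr : 0 < r) (hdr : 4 * |d| * r ≤ 1) (hδ : δ ∈ Ioo 0 (r ^ 2 / 2)) {a b : ℝ}
    (ha : a ∈ Ioo 0 r ∧ a ^ 2 * (1 + d * a) = δ) (hb : b ∈ Ioo 0 r ∧ b ^ 2 * (1 + -d * b) = δ) :
    {q | q ∈ Ioo (-r) r ∧ q ^ 2 * (1 + d * q) = δ} = {a, -b} := by
  ext q
  simp only [mem_ofPred_eq, mem_insert_iff, mem_singleton_iff]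
  constructor
  · rintro ⟨⟨hlo, hhi⟩, hroot⟩
    rcases lt_trichotomy q 0 with hneg | rfl | hpos
    · have hdr' : 4 * |-d| * r ≤ 1 := by rwa [abs_neg]
      have : -q = b := (existsUnique_root_Ioo hr hdr' hδ).unique
        ⟨⟨by linarith, by linarith⟩, by linear_combination hroot⟩ hb
      exact Or.inr (by linarith)
    · norm_num at hroot
      linarith [hδ.1]
    · exact Or.inl ((existsUnique_root_Ioo hr hdr hδ).unique ⟨⟨hpos, hhi⟩, hroot⟩ ha)
  · rintro (rfl | rfl)
    · exact ⟨⟨by linarith [ha.1.1], ha.1.2⟩, ha.2⟩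
    · exact ⟨⟨by linarith [hb.1.2], by linarith [hb.1.1]⟩, by linear_combination hb.2⟩

lemma eq_sqrt_div_sqrt_of_sq_mul_eq {a u : ℝ} (ha : 0 ≤ a) (hu : 0 < u) (h : a ^ 2 * u = δ) :
    a = √δ / √u := by
  rw [eq_div_iff (Real.sqrt_pos.2 hu).ne', ← h, Real.sqrt_mul (sq_nonneg a), Real.sqrt_sq ha]

lemma sq_sub_sq_div_rpow_eq {a b : ℝ} (hδ : 0 < δ) (ha : 0 < a) (hb : 0 < b)
    (hu : 0 < 1 + d * a) (hv : 0 < 1 + -d * b)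
    (ea : a ^ 2 * (1 + d * a) = δ) (eb : b ^ 2 * (1 + -d * b) = δ) :
    (a ^ 2 - b ^ 2) / δ ^ ((3 : ℝ) / 2)
      = -d * (1 / √(1 + d * a) + 1 / √(1 + -d * b)) / ((1 + d * a) * (1 + -d * b)) := by
  have hsum : a + b = √δ * (1 / √(1 + d * a) + 1 / √(1 + -d * b)) := by
    rw [mul_add, ← div_eq_mul_one_div, ← div_eq_mul_one_div,
      ← eq_sqrt_div_sqrt_of_sq_mul_eq ha.le hu ea, ← eq_sqrt_div_sqrt_of_sq_mul_eq hb.le hv eb]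
  have hdiff : a ^ 2 - b ^ 2 = -d * δ * (a + b) / ((1 + d * a) * (1 + -d * b)) := by
    rw [eq_div_iff (by positivity)]
    linear_combination (1 + -d * b) * ea - (1 + d * a) * eb
  have hpow : δ ^ ((3 : ℝ) / 2) = δ * √δ := by
    rw [Real.sqrt_eq_rpow, ← Real.rpow_one_add' hδ.le (by norm_num)]
    norm_num
  rw [hdiff, hsum, hpow]
  field_simp

lemma tendsto_ratio (d : ℝ) :
    Tendsto (fun x : ℝ × ℝ =>
      -d * (1 / √(1 + d * x.1) + 1 / √(1 + -d * x.2)) / ((1 + d * x.1) * (1 + -d * x.2)))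
      (𝓝 0) (𝓝 (-2 * d)) := by
  have hcont : ContinuousAt (fun x : ℝ × ℝ =>
      -d * (1 / √(1 + d * x.1) + 1 / √(1 + -d * x.2)) / ((1 + d * x.1) * (1 + -d * x.2))) 0 := by
    fun_prop (disch := simp)
  convert hcont.tendsto using 2
  simp only [Prod.fst_zero, Prod.snd_zero, mul_zero, add_zero, Real.sqrt_one, mul_one]
  ring

end CuspNormalForm

open CuspNormalForm

/-- normal form of the cuspidal ω1-ω2 bifurcation: the equation
`q²(1 + dq) = δ` has, for small `δ > 0`, exactly two small solutions
`q2(δ) < 0 < q1(δ)`, both tending to `0`, and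
`(q1(δ)² - q2(δ)²)/δ^{3/2} → -2d` as `δ → 0⁺`. -/
theorem cusp_normal_form (d : ℝ) :
    ∃ δ0 > 0, ∃ r > 0, ∃ q1 q2 : ℝ → ℝ,
      (∀ δ ∈ Set.Ioo (0 : ℝ) δ0, q2 δ < 0 ∧ 0 < q1 δ) ∧
      Tendsto q1 (nhdsWithin 0 (Set.Ioi (0 : ℝ))) (nhds 0) ∧
      Tendsto q2 (nhdsWithin 0 (Set.Ioi (0 : ℝ))) (nhds 0) ∧
      (∀ δ ∈ Set.Ioo (0 : ℝ) δ0,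
        {q : ℝ | q ∈ Set.Ioo (-r) r ∧ q^2 * (1 + d * q) = δ} = {q1 δ, q2 δ}) ∧
      Tendsto (fun δ : ℝ => ((q1 δ)^2 - (q2 δ)^2) / δ ^ ((3:ℝ)/2))
        (nhdsWithin 0 (Set.Ioi (0 : ℝ))) (nhds (-2 * d)) := by
  set r : ℝ := (4 * (|d| + 1))⁻¹
  have hr : 0 < r := by positivity
  have hdr : 4 * |d| * r ≤ 1 := by
    rw [← div_eq_mul_inv, div_le_one (by positivity)]; linarith
  have hdr' : 4 * |-d| * r ≤ 1 := by rwa [abs_neg]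
  have hδ₀ : 0 < r ^ 2 / 2 := by positivity
  choose! a ha using fun δ (hδ : δ ∈ Ioo 0 (r ^ 2 / 2)) => (existsUnique_root_Ioo hr hdr hδ).exists
  choose! b hb using fun δ (hδ : δ ∈ Ioo 0 (r ^ 2 / 2)) => (existsUnique_root_Ioo hr hdr' hδ).exists
  have ha₀ := tendsto_root_nhdsGT_zero hδ₀ hdr ha
  have hb₀ := tendsto_root_nhdsGT_zero hδ₀ hdr' hb
  refine ⟨r ^ 2 / 2, hδ₀, r, hr, a, fun δ => -b δ,
    fun δ hδ => ⟨neg_neg_of_pos (hb δ hδ).1.1, (ha δ hδ).1.1⟩, ha₀, by simpa using hb₀.neg,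
    fun δ hδ => root_set_eq hr hdr hδ (ha δ hδ) (hb δ hδ), ?_⟩
  refine ((tendsto_ratio d).comp (ha₀.prodMk_nhds hb₀)).congr' ?_
  filter_upwards [Ioo_mem_nhdsGT hδ₀] with δ hδ
  obtain ⟨⟨ha_pos, ha_lt⟩, ha_root⟩ := ha δ hδ
  obtain ⟨⟨hb_pos, hb_lt⟩, hb_root⟩ := hb δ hδ
  have hu := half_le_one_add_mul hdr ((abs_of_pos ha_pos).trans_le ha_lt.le)
  have hv := half_le_one_add_mul hdr' ((abs_of_pos hb_pos).trans_le hb_lt.le)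
  rw [Function.comp_apply, neg_sq, sq_sub_sq_div_rpow_eq hδ.1 ha_pos hb_pos (by linarith)
    (by linarith) ha_root hb_root]
end
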